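/- In the subgroup A := ⟨a, w⟩ of Aut T, the elements of order 4 are exactly w·a and a·w. -/

import Mathlib

universe u

namespace DicePaper

/-- Words of length `n` over the level-indexed sequence of alphabets `X`. -/
def Word (X : ℕ → Type u) : ℕ → Type u
  | 0 => PUnit
  | n + 1 => X 0 × Word (fun k => X (k + 1)) n

/-- An automorphism of the spherically homogeneous rooted tree with alphabets `X`,
encoded by its portrait: a permutation of the children alphabet at each vertex. -/
def TreeAut (X : ℕ → Type u) : Type u :=
  ∀ n, Word X n → Equiv.Perm (X n)

namespace TreeAut

/-- The section (state) of a tree automorphism at a first-level vertex. -/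
def sec {X : ℕ → Type u} (f : TreeAut X) (x : X 0) : TreeAut fun k => X (k + 1) :=
  fun n v => f (n + 1) (x, v)

/-- Action of a tree automorphism on the vertices (words). -/
def act : ∀ (X : ℕ → Type u), TreeAut X → ∀ n, Word X n → Word X n
  | _, _, 0, _ => PUnit.unit
  | X, f, n + 1, v => (f 0 PUnit.unit v.1, act (fun k => X (k + 1)) (f.sec v.1) n v.2)

/-- The inverse action on words. -/
def invAct : ∀ (X : ℕ → Type u), TreeAut X → ∀ n, Word X n → Word X n
  | _, _, 0, _ => PUnit.unit
  | X, f, n + 1, v =>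
    ((f 0 PUnit.unit)⁻¹ v.1,
      invAct (fun k => X (k + 1)) (f.sec ((f 0 PUnit.unit)⁻¹ v.1)) n v.2)

variable {X : ℕ → Type u}

instance : One (TreeAut X) := ⟨fun _ _ => 1⟩
instance : Mul (TreeAut X) := ⟨fun f g n v => f n (act X g n v) * g n v⟩
instance : Inv (TreeAut X) := ⟨fun f n v => (f n (invAct X f n v))⁻¹⟩

theorem one_apply (n : ℕ) (v : Word X n) : (1 : TreeAut X) n v = 1 := rfl
theorem mul_apply (f g : TreeAut X) (n : ℕ) (v : Word X n) :
    (f * g) n v = f n (act X g n v) * g n v := rfl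
theorem inv_apply (f : TreeAut X) (n : ℕ) (v : Word X n) :
    f⁻¹ n v = (f n (invAct X f n v))⁻¹ := rfl

theorem act_one : ∀ (n : ℕ) (X : ℕ → Type u) (v : Word X n), act X 1 n v = v
  | 0, _, _ => rfl
  | n + 1, X, v => by
    show ((1 : Equiv.Perm (X 0)) v.1, act _ (sec 1 v.1) n v.2) = v
    have : sec (1 : TreeAut X) v.1 = 1 := rfl
    rw [this, act_one n _ v.2]
    rfl

theorem sec_mul (f g : TreeAut X) (x : X 0) :
    sec (f * g) x = sec f (g 0 PUnit.unit x) * sec g x := rfl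

theorem act_mul : ∀ (n : ℕ) (X : ℕ → Type u) (f g : TreeAut X) (v : Word X n),
    act X (f * g) n v = act X f n (act X g n v)
  | 0, _, _, _, _ => rfl
  | n + 1, X, f, g, v => by
    show ((f * g) 0 PUnit.unit v.1, act _ (sec (f * g) v.1) n v.2) = _
    rw [sec_mul, act_mul n _ (sec f (g 0 PUnit.unit v.1)) (sec g v.1) v.2]
    rfl

theorem sec_inv (f : TreeAut X) (x : X 0) :
    sec f⁻¹ x = (sec f ((f 0 PUnit.unit)⁻¹ x))⁻¹ := by
  funext n v
  rfl

theorem act_invAct : ∀ (n : ℕ) (X : ℕ → Type u) (f : TreeAut X) (v : Word X n),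
    act X f n (invAct X f n v) = v
  | 0, _, _, _ => rfl
  | n + 1, X, f, v => by
    show (f 0 PUnit.unit ((f 0 PUnit.unit)⁻¹ v.1),
      act _ (sec f ((f 0 PUnit.unit)⁻¹ v.1)) n
        (invAct _ (sec f ((f 0 PUnit.unit)⁻¹ v.1)) n v.2)) = v
    rw [act_invAct n _ _ v.2]
    simp
    rfl

theorem invAct_act : ∀ (n : ℕ) (X : ℕ → Type u) (f : TreeAut X) (v : Word X n),
    invAct X f n (act X f n v) = v
  | 0, _, _, _ => rfl
  | n + 1, X, f, v => by
    show ((f 0 PUnit.unit)⁻¹ (f 0 PUnit.unit v.1),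
      invAct _ (sec f ((f 0 PUnit.unit)⁻¹ (f 0 PUnit.unit v.1))) n
        (act _ (sec f v.1) n v.2)) = v
    have h : (f 0 PUnit.unit)⁻¹ (f 0 PUnit.unit v.1) = v.1 := by simp
    rw [h, invAct_act n _ _ v.2]
    rfl

instance : Group (TreeAut X) where
  mul_assoc f g h := by
    funext n v
    show (f n (act X g n (act X h n v)) * g n (act X h n v)) * h n v
        = f n (act X (g * h) n v) * (g n (act X h n v) * h n v)
    rw [act_mul]
    exact mul_assoc _ _ _
  one_mul f := by
    funext n v
    show (1 : TreeAut X) n (act X f n v) * f n v = f n v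
    rw [one_apply, one_mul]
  mul_one f := by
    funext n v
    show f n (act X 1 n v) * (1 : TreeAut X) n v = f n v
    rw [act_one, one_apply, mul_one]
  inv_mul_cancel f := by
    funext n v
    show f⁻¹ n (act X f n v) * f n v = 1
    rw [inv_apply, invAct_act, inv_mul_cancel]

end TreeAut



/-- The alphabet `X = {0,…,7}` identified with `(ℤ/2)³` via binary digits. -/
abbrev V : Type := ZMod 2 × ZMod 2 × ZMod 2

/-- The rooted automorphism of the regular rooted tree over `V` determined by a
permutation of the alphabet: it permutes the first letter of every word. -/
def rooted (σ : Equiv.Perm V) : TreeAut fun _ => V :=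
  fun n _ => match n with
  | 0 => σ
  | _ + 1 => 1

/-- The rooted automorphism `a` (adding `1`, i.e. flipping the first binary digit). -/
def aAut : TreeAut fun _ => V := rooted (Equiv.addLeft ((1, 0, 0) : V))

/-- The rooted automorphism `b` (adding `2`, i.e. flipping the second binary digit). -/
def bAut : TreeAut fun _ => V := rooted (Equiv.addLeft ((0, 1, 0) : V))

/-- The rooted automorphism `c` (adding `4`, i.e. flipping the third binary digit). -/
def cAut : TreeAut fun _ => V := rooted (Equiv.addLeft ((0, 0, 1) : V))

/-- The portrait of the directed automorphism `w`: its first-level sections are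
`w` at `0`, `a` at `3 = (1,1,0)`, `b` at `5 = (1,0,1)`, `c` at `6 = (0,1,1)`,
and trivial elsewhere; `w` fixes the first level. -/
def wPerm : ∀ n, Word (fun _ => V) n → Equiv.Perm V
  | 0, _ => 1
  | n + 1, v =>
    if v.1 = (0 : V) then wPerm n v.2
    else
      match n with
      | 0 =>
        if v.1 = ((1, 1, 0) : V) then Equiv.addLeft ((1, 0, 0) : V)
        else if v.1 = ((1, 0, 1) : V) then Equiv.addLeft ((0, 1, 0) : V)
        else if v.1 = ((0, 1, 1) : V) then Equiv.addLeft ((0, 0, 1) : V)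
        else 1
      | _ + 1 => 1

/-- The directed automorphism `w` with `w = (w, 1, 1, a, 1, b, c, 1)`. -/
def wAut : TreeAut fun _ => V := fun n v => wPerm n v

/-- For `k ∈ X`, the unique element `h_k` of `H = ⟨a,b,c⟩` with `h_k(0) = k`,
as a rooted automorphism of the tree. -/
def hA (k : V) : TreeAut fun _ => V := rooted (Equiv.addLeft k)

/-- The conjugates `w_k := h_k⁻¹ w h_k`, `k ∈ X`. -/
def wk (k : V) : TreeAut fun _ => V := (hA k)⁻¹ * wAut * hA k

/-- The red tetrahedron `{0, 3, 5, 6}`. -/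
def red : Set V := {(0, 0, 0), (1, 1, 0), (1, 0, 1), (0, 1, 1)}

/-- The black tetrahedron `{1, 2, 4, 7}`. -/
def black : Set V := {(1, 0, 0), (0, 1, 0), (0, 0, 1), (1, 1, 1)}


section Aux

open TreeAut

variable {X : ℕ → Type u}

theorem tree_ext (f g : TreeAut X) (h0 : f 0 PUnit.unit = g 0 PUnit.unit)
    (hs : ∀ x, sec f x = sec g x) : f = g := by
  funext n v
  cases n with
  | zero => exact h0
  | succ n => exact congrFun (congrFun (hs v.1) n) v.2

theorem root_mul (f g : TreeAut X) :
    (f * g) 0 PUnit.unit = f 0 PUnit.unit * g 0 PUnit.unit := rfl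

theorem sec_one (x : X 0) : sec (1 : TreeAut X) x = 1 := rfl

theorem sq_eq_one (f : TreeAut X)
    (h0 : f 0 PUnit.unit * f 0 PUnit.unit = 1)
    (hs : ∀ x, sec f (f 0 PUnit.unit x) * sec f x = 1) : f * f = 1 := by
  refine tree_ext _ _ ?_ ?_
  · exact h0
  · intro x
    rw [sec_mul]
    exact hs x

theorem rooted_root (σ : Equiv.Perm V) : rooted σ 0 PUnit.unit = σ := rfl

theorem sec_rooted (σ : Equiv.Perm V) (x : V) : sec (rooted σ) x = 1 := by
  funext n v; rfl

theorem rooted_mul (σ τ : Equiv.Perm V) : rooted σ * rooted τ = rooted (σ * τ) := by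
  refine tree_ext _ _ rfl fun x => ?_
  rw [sec_mul, sec_rooted, sec_rooted, sec_rooted, one_mul]

theorem rooted_one : rooted 1 = 1 := by
  funext n v
  cases n <;> rfl

theorem addLeft_sq (e : V) (he : e + e = 0) :
    Equiv.addLeft e * Equiv.addLeft e = 1 := by
  refine Equiv.ext fun z => ?_
  show e + (e + z) = z
  rw [← add_assoc, he, zero_add]

theorem a_sq : aAut * aAut = 1 := by
  rw [aAut, rooted_mul, addLeft_sq _ (by decide), rooted_one]

theorem b_sq : bAut * bAut = 1 := by
  rw [bAut, rooted_mul, addLeft_sq _ (by decide), rooted_one]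

theorem c_sq : cAut * cAut = 1 := by
  rw [cAut, rooted_mul, addLeft_sq _ (by decide), rooted_one]

theorem w_root : wAut 0 PUnit.unit = 1 := rfl

theorem sec_w0 : sec wAut (((0,0,0)) : V) = wAut := by
  funext n v
  show wPerm (n+1) ((0,0,0), v) = wAut n v
  cases n <;> first | rfl | decide | (simp only [wPerm]; decide)

theorem sec_w3 : sec wAut (((1,1,0)) : V) = aAut := by
  funext n v
  show wPerm (n+1) ((1,1,0), v) = aAut n v
  cases n <;> first | rfl | decide | (simp only [wPerm]; decide)

theorem sec_w5 : sec wAut (((1,0,1)) : V) = bAut := by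
  funext n v
  show wPerm (n+1) ((1,0,1), v) = bAut n v
  cases n <;> first | rfl | decide | (simp only [wPerm]; decide)

theorem sec_w6 : sec wAut (((0,1,1)) : V) = cAut := by
  funext n v
  show wPerm (n+1) ((0,1,1), v) = cAut n v
  cases n <;> first | rfl | decide | (simp only [wPerm]; decide)

theorem sec_w1 : sec wAut (((1,0,0)) : V) = 1 := by
  funext n v
  show wPerm (n+1) ((1,0,0), v) = (1 : TreeAut fun _ => V) n v
  cases n <;> first | rfl | decide | (simp only [wPerm]; decide)

theorem sec_w2 : sec wAut (((0,1,0)) : V) = 1 := by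
  funext n v
  show wPerm (n+1) ((0,1,0), v) = (1 : TreeAut fun _ => V) n v
  cases n <;> first | rfl | decide | (simp only [wPerm]; decide)

theorem sec_w4 : sec wAut (((0,0,1)) : V) = 1 := by
  funext n v
  show wPerm (n+1) ((0,0,1), v) = (1 : TreeAut fun _ => V) n v
  cases n <;> first | rfl | decide | (simp only [wPerm]; decide)

theorem sec_w7 : sec wAut (((1,1,1)) : V) = 1 := by
  funext n v
  show wPerm (n+1) ((1,1,1), v) = (1 : TreeAut fun _ => V) n v
  cases n <;> first | rfl | decide | (simp only [wPerm]; decide)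

theorem vcases : ∀ x : V, x = (0,0,0) ∨ x = (1,0,0) ∨ x = (0,1,0) ∨ x = (1,1,0) ∨
    x = (0,0,1) ∨ x = (1,0,1) ∨ x = (0,1,1) ∨ x = (1,1,1) := by decide

theorem w_sq : wAut * wAut = 1 := by
  have key : ∀ n (v : Word (fun _ => V) n), (wAut * wAut) n v = 1 := by
    intro n
    induction n with
    | zero => intro v; rfl
    | succ n ih =>
      intro v
      obtain ⟨x, v'⟩ := v
      have hx : (wAut * wAut) (n+1) (x, v') = (sec wAut x * sec wAut x) n v' := rfl
      rw [hx]
      rcases vcases x with rfl|rfl|rfl|rfl|rfl|rfl|rfl|rfl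
      · rw [sec_w0]; exact ih v'
      · rw [sec_w1]; rfl
      · rw [sec_w2]; rfl
      · rw [sec_w3]; exact congrFun (congrFun a_sq n) v'
      · rw [sec_w4]; rfl
      · rw [sec_w5]; exact congrFun (congrFun b_sq n) v'
      · rw [sec_w6]; exact congrFun (congrFun c_sq n) v'
      · rw [sec_w7]; rfl
  funext n v
  exact key n v

theorem sec_u (x : V) : sec (aAut * wAut) x = sec wAut x := by
  rw [sec_mul, show sec aAut ((wAut 0 PUnit.unit) x) = 1 from sec_rooted _ _, one_mul]

theorem u_root : (aAut * wAut) 0 PUnit.unit = Equiv.addLeft ((1,0,0) : V) := by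
  rw [root_mul, w_root, mul_one]; rfl

theorem d_root : ((aAut * wAut) * (aAut * wAut)) 0 PUnit.unit = 1 := by
  rw [root_mul, u_root, addLeft_sq _ (by decide)]

theorem d_sq : ((aAut * wAut) * (aAut * wAut)) * ((aAut * wAut) * (aAut * wAut)) = 1 := by
  refine sq_eq_one _ ?_ ?_
  · rw [d_root, one_mul]
  · intro x
    rw [d_root]
    simp only [Equiv.Perm.coe_one, id_eq]
    rw [sec_mul, u_root, sec_u, sec_u]
    rcases vcases x with rfl|rfl|rfl|rfl|rfl|rfl|rfl|rfl
    · rw [show (Equiv.addLeft ((1,0,0):V)) ((0,0,0):V) = ((1,0,0):V) from by decide,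
        sec_w1, sec_w0]
      simp [w_sq]
    · rw [show (Equiv.addLeft ((1,0,0):V)) ((1,0,0):V) = ((0,0,0):V) from by decide,
        sec_w0, sec_w1]
      simp [w_sq]
    · rw [show (Equiv.addLeft ((1,0,0):V)) ((0,1,0):V) = ((1,1,0):V) from by decide,
        sec_w3, sec_w2]
      simp [a_sq]
    · rw [show (Equiv.addLeft ((1,0,0):V)) ((1,1,0):V) = ((0,1,0):V) from by decide,
        sec_w2, sec_w3]
      simp [a_sq]
    · rw [show (Equiv.addLeft ((1,0,0):V)) ((0,0,1):V) = ((1,0,1):V) from by decide,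
        sec_w5, sec_w4]
      simp [b_sq]
    · rw [show (Equiv.addLeft ((1,0,0):V)) ((1,0,1):V) = ((0,0,1):V) from by decide,
        sec_w4, sec_w5]
      simp [b_sq]
    · rw [show (Equiv.addLeft ((1,0,0):V)) ((0,1,1):V) = ((1,1,1):V) from by decide,
        sec_w7, sec_w6]
      simp [c_sq]
    · rw [show (Equiv.addLeft ((1,0,0):V)) ((1,1,1):V) = ((0,1,1):V) from by decide,
        sec_w6, sec_w7]
      simp [c_sq]

theorem pow4_eq {G : Type*} [Group G] (u : G) : u ^ 4 = (u * u) * (u * u) := by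
  rw [show (4:ℕ) = 3 + 1 from rfl, pow_succ, show (3:ℕ) = 2 + 1 from rfl, pow_succ,
    pow_two, mul_assoc]

theorem u_pow4 : (aAut * wAut) ^ 4 = 1 := by
  rw [pow4_eq]
  exact d_sq

theorem u_sq_ne : (aAut * wAut) * (aAut * wAut) ≠ 1 := by
  intro h
  have h1 := congrFun (congrFun h 1) ((((0,1,0):V)), PUnit.unit)
  have h2 := congrArg (fun σ : Equiv.Perm V => σ ((0,0,0):V)) h1
  exact absurd h2 (by decide)

theorem ord_u : orderOf (aAut * wAut) = 4 := by
  have h := orderOf_eq_prime_pow (x := aAut * wAut) (p := 2) (n := 1)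
    (by rw [show (2:ℕ)^1 = 2 from rfl, pow_two]; exact u_sq_ne)
    (by rw [show (2:ℕ)^(1+1) = 4 from rfl]; exact u_pow4)
  simpa using h

theorem a_inv : aAut⁻¹ = aAut := inv_eq_of_mul_eq_one_right a_sq
theorem w_inv : wAut⁻¹ = wAut := inv_eq_of_mul_eq_one_right w_sq

theorem u_inv : (aAut * wAut)⁻¹ = wAut * aAut := by
  rw [mul_inv_rev, a_inv, w_inv]

theorem ord_u' : orderOf (wAut * aAut) = 4 := by
  rw [← u_inv, orderOf_inv, ord_u]

theorem hz : wAut * aAut * (wAut * aAut) = aAut * wAut * (aAut * wAut) := by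
  have hsq1 : (aAut * wAut * (aAut * wAut)) * (aAut * wAut * (aAut * wAut)) = 1 := by
    rw [← pow4_eq]
    exact u_pow4
  rw [← u_inv, ← mul_inv_rev]
  exact inv_eq_of_mul_eq_one_right hsq1

theorem haa (x : TreeAut fun _ => V) : aAut * (aAut * x) = x := by
  rw [← mul_assoc, a_sq, one_mul]

theorem hww (x : TreeAut fun _ => V) : wAut * (wAut * x) = x := by
  rw [← mul_assoc, w_sq, one_mul]

theorem hkey0 : wAut * (aAut * (wAut * aAut)) = aAut * (wAut * (aAut * wAut)) := by
  simpa [mul_assoc] using hz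

theorem hkey (x : TreeAut fun _ => V) :
    wAut * (aAut * (wAut * (aAut * x))) = aAut * (wAut * (aAut * (wAut * x))) := by
  calc wAut * (aAut * (wAut * (aAut * x))) = (wAut * (aAut * (wAut * aAut))) * x := by
        simp only [mul_assoc]
    _ = (aAut * (wAut * (aAut * wAut))) * x := by rw [hkey0]
    _ = aAut * (wAut * (aAut * (wAut * x))) := by simp only [mul_assoc]

attribute [local irreducible] aAut wAut bAut cAut rooted

/-- The eight elements of `A`. -/
def Sset : Set (TreeAut fun _ => V) :=
  {1, aAut, wAut, aAut * wAut, wAut * aAut,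
    aAut * (wAut * aAut), wAut * (aAut * wAut), aAut * (wAut * (aAut * wAut))}

theorem mem_S : ∀ g ∈ (Subgroup.closure {aAut, wAut} : Subgroup (TreeAut fun _ => V)),
    g ∈ Sset := by
  intro g hg
  induction hg using Subgroup.closure_induction with
  | mem x hx =>
    simp only [Set.mem_insert_iff, Set.mem_singleton_iff] at hx
    rcases hx with rfl | rfl <;>
      · simp only [Sset, Set.mem_insert_iff, Set.mem_singleton_iff]
        tauto
  | one =>
    simp only [Sset, Set.mem_insert_iff, Set.mem_singleton_iff]
    tauto
  | mul x y hx hy px py =>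
    simp only [Sset, Set.mem_insert_iff, Set.mem_singleton_iff] at px py ⊢
    rcases px with rfl|rfl|rfl|rfl|rfl|rfl|rfl|rfl <;>
      rcases py with rfl|rfl|rfl|rfl|rfl|rfl|rfl|rfl <;>
      · simp only [mul_assoc, haa, hww, hkey, hkey0, a_sq, w_sq, one_mul, mul_one]
        tauto
  | inv x hx px =>
    simp only [Sset, Set.mem_insert_iff, Set.mem_singleton_iff] at px ⊢
    rcases px with rfl|rfl|rfl|rfl|rfl|rfl|rfl|rfl <;>
      · simp only [mul_inv_rev, inv_one, a_inv, w_inv, mul_assoc, haa, hww, hkey, hkey0,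
          a_sq, w_sq, one_mul, mul_one]
        tauto

theorem not_ord4 (h : TreeAut fun _ => V) (hh : h * h = 1) : orderOf h ≠ 4 := by
  intro h4
  have hd : orderOf h ∣ 2 := orderOf_dvd_of_pow_eq_one (by rw [pow_two, hh])
  rw [h4] at hd
  norm_num at hd

end Aux

end DicePaper

open DicePaper in
/-- in `A = ⟨a, w⟩`, the elements of order 4 are exactly `w·a` and `a·w`. -/
theorem stmt3 :
    ∀ g ∈ (Subgroup.closure {aAut, wAut} : Subgroup (TreeAut fun _ => V)),
      (orderOf g = 4 ↔ g = wAut * aAut ∨ g = aAut * wAut) := by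
  intro g hg
  have hmem := DicePaper.mem_S g hg
  simp only [DicePaper.Sset, Set.mem_insert_iff, Set.mem_singleton_iff] at hmem
  have hmpr : ∀ h : TreeAut fun _ => V,
      (h = wAut * aAut ∨ h = aAut * wAut) → orderOf h = 4 := by
    rintro h (rfl | rfl)
    · exact DicePaper.ord_u'
    · exact DicePaper.ord_u
  rcases hmem with rfl | rfl | rfl | rfl | rfl | rfl | rfl | rfl
  · exact ⟨fun h4 => absurd h4 (DicePaper.not_ord4 _ (one_mul 1)), hmpr _⟩
  · exact ⟨fun h4 => absurd h4 (DicePaper.not_ord4 _ DicePaper.a_sq), hmpr _⟩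
  · exact ⟨fun h4 => absurd h4 (DicePaper.not_ord4 _ DicePaper.w_sq), hmpr _⟩
  · exact ⟨fun _ => Or.inr rfl, hmpr _⟩
  · exact ⟨fun _ => Or.inl rfl, hmpr _⟩
  · refine ⟨fun h4 => absurd h4 (DicePaper.not_ord4 _ ?_), hmpr _⟩
    simp only [mul_assoc, DicePaper.haa, DicePaper.hww, DicePaper.hkey, DicePaper.hkey0,
      DicePaper.a_sq, DicePaper.w_sq, one_mul, mul_one]
  · refine ⟨fun h4 => absurd h4 (DicePaper.not_ord4 _ ?_), hmpr _⟩
    simp only [mul_assoc, DicePaper.haa, DicePaper.hww, DicePaper.hkey, DicePaper.hkey0,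
      DicePaper.a_sq, DicePaper.w_sq, one_mul, mul_one]
  · refine ⟨fun h4 => absurd h4 (DicePaper.not_ord4 _ ?_), hmpr _⟩
    simp only [mul_assoc, DicePaper.haa, DicePaper.hww, DicePaper.hkey, DicePaper.hkey0,
      DicePaper.a_sq, DicePaper.w_sq, one_mul, mul_one]
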